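/- For every even n ≥ 10, the word aba·(abaabbab)^{(n−8)/2}·ab³·(abaabbab)·aaba (of length 4n−13) is a reset word for the automaton 𝒜_n, i.e., it maps every state of Q_n to the sink state 0. -/

import Mathlib

/-- The two letters of a binary alphabet. -/
inductive Letter where
  | a : Letter
  | b : Letter
deriving DecidableEq

/-- The transition function of the automaton `𝒜ₙ` on the state set
`Qₙ = {0, 1, …, n-1}` (represented inside `ℕ`):
`δ(0,a)=δ(0,b)=0`; `δ(1,a)=0`, `δ(2,a)=4`, `δ(3,a)=2`, `δ(4,a)=3`;
`δ(1,b)=3`, `δ(2,b)=1`, `δ(3,b)=2`; and for `4 ≤ j ≤ n-1`: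
`δ(j,a) = j-1` if `j ≥ 6` is even, `δ(j,a) = j+1` if `j ≥ 5` is odd and
`j ≠ n-1`, `δ(j,a) = j` if `j = n-1` is odd; `δ(j,b) = j-1` if `j ≥ 5` is odd,
`δ(j,b) = j+1` if `j ≥ 4` is even and `j ≠ n-1`, `δ(j,b) = j` if `j = n-1`
is even. -/
def anDelta (n : ℕ) (q : ℕ) (ℓ : Letter) : ℕ :=
  match q, ℓ with
  | 0, _ => 0
  | 1, Letter.a => 0
  | 1, Letter.b => 3
  | 2, Letter.a => 4
  | 2, Letter.b => 1
  | 3, _ => 2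
  | 4, Letter.a => 3
  | j, Letter.a => if j % 2 = 1 then (if j = n - 1 then j else j + 1) else j - 1
  | j, Letter.b => if j % 2 = 0 then (if j = n - 1 then j else j + 1) else j - 1

/-- Extension of the transition function of `𝒜ₙ` to words:
`δ(q, uv) = δ(δ(q, u), v)`. -/
def anStar (n : ℕ) (q : ℕ) (w : List Letter) : ℕ :=
  w.foldl (anDelta n) q

namespace AnReset

open Letter

/-- The block word `abaabbab`. -/
def wB : List Letter := [a, b, a, a, b, b, a, b]

lemma anStar_cons (n q : ℕ) (l : Letter) (w : List Letter) :
    anStar n q (l :: w) = anStar n (anDelta n q l) w := rfl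
lemma anStar_nil (n q : ℕ) : anStar n q [] = q := rfl
lemma anStar_append (n q : ℕ) (u v : List Letter) :
    anStar n q (u ++ v) = anStar n (anStar n q u) v := List.foldl_append ..

/- Concrete one-step lemmas. -/
lemma d0a (n : ℕ) : anDelta n 0 a = 0 := rfl
lemma d0b (n : ℕ) : anDelta n 0 b = 0 := rfl
lemma d1a (n : ℕ) : anDelta n 1 a = 0 := rfl
lemma d1b (n : ℕ) : anDelta n 1 b = 3 := rfl
lemma d2a (n : ℕ) : anDelta n 2 a = 4 := rfl
lemma d2b (n : ℕ) : anDelta n 2 b = 1 := rfl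
lemma d3a (n : ℕ) : anDelta n 3 a = 2 := rfl
lemma d3b (n : ℕ) : anDelta n 3 b = 2 := rfl
lemma d4a (n : ℕ) : anDelta n 4 a = 3 := rfl
lemma d5b (n : ℕ) : anDelta n 5 b = 4 := rfl
lemma d6a (n : ℕ) : anDelta n 6 a = 5 := rfl
lemma d7b (n : ℕ) : anDelta n 7 b = 6 := rfl
lemma d8a (n : ℕ) : anDelta n 8 a = 7 := rfl
lemma d9b (n : ℕ) : anDelta n 9 b = 8 := rfl
lemma d10a (n : ℕ) : anDelta n 10 a = 9 := rfl
lemma d4b (n : ℕ) (h : 10 ≤ n) : anDelta n 4 b = 5 := by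
  show (if (4:ℕ) = n - 1 then 4 else 5) = 5
  rw [if_neg (by omega)]
lemma d5a (n : ℕ) (h : 10 ≤ n) : anDelta n 5 a = 6 := by
  show (if (5:ℕ) = n - 1 then 5 else 6) = 6
  rw [if_neg (by omega)]
lemma d6b (n : ℕ) (h : 10 ≤ n) : anDelta n 6 b = 7 := by
  show (if (6:ℕ) = n - 1 then 6 else 7) = 7
  rw [if_neg (by omega)]
lemma d8b (n : ℕ) (h : 12 ≤ n) : anDelta n 8 b = 9 := by
  show (if (8:ℕ) = n - 1 then 8 else 9) = 9
  rw [if_neg (by omega)]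

/- General one-step lemmas (states ≥ 4/5 handled by the catch-all arms). -/
lemma da_even (n q : ℕ) (h : q % 2 = 0) (h6 : 6 ≤ q) : anDelta n q a = q - 1 := by
  obtain ⟨m, rfl⟩ : ∃ m, q = m + 5 := ⟨q - 5, by omega⟩
  show (if (m+5) % 2 = 1 then (if m+5 = n-1 then m+5 else m+5+1) else (m+5-1)) = m+5-1
  rw [if_neg (by omega)]
lemma da_odd (n q : ℕ) (h : q % 2 = 1) (h5 : 5 ≤ q) (hne : q ≠ n - 1) :
    anDelta n q a = q + 1 := by
  obtain ⟨m, rfl⟩ : ∃ m, q = m + 5 := ⟨q - 5, by omega⟩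
  show (if (m+5) % 2 = 1 then (if m+5 = n-1 then m+5 else m+5+1) else (m+5-1)) = m+5+1
  rw [if_pos h, if_neg hne]
lemma da_odd_top (n q : ℕ) (h : q % 2 = 1) (h5 : 5 ≤ q) (he : q = n - 1) :
    anDelta n q a = q := by
  obtain ⟨m, rfl⟩ : ∃ m, q = m + 5 := ⟨q - 5, by omega⟩
  show (if (m+5) % 2 = 1 then (if m+5 = n-1 then m+5 else m+5+1) else (m+5-1)) = m+5
  rw [if_pos h, if_pos he]
lemma db_odd (n q : ℕ) (h : q % 2 = 1) (h5 : 5 ≤ q) : anDelta n q b = q - 1 := by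
  obtain ⟨m, rfl⟩ : ∃ m, q = m + 5 := ⟨q - 5, by omega⟩
  show (if (m+5) % 2 = 0 then (if m+5 = n-1 then m+5 else m+5+1) else (m+5-1)) = m+5-1
  rw [if_neg (by omega)]
lemma db_even (n q : ℕ) (h : q % 2 = 0) (h5 : 6 ≤ q) (hne : q ≠ n - 1) :
    anDelta n q b = q + 1 := by
  obtain ⟨m, rfl⟩ : ∃ m, q = m + 5 := ⟨q - 5, by omega⟩
  show (if (m+5) % 2 = 0 then (if m+5 = n-1 then m+5 else m+5+1) else (m+5-1)) = m+5+1
  rw [if_pos h, if_neg hne]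

/- Action of the block `wB` on the various classes of states. -/
lemma B0 (n : ℕ) : anStar n 0 wB = 0 := rfl
lemma B1 (n : ℕ) : anStar n 1 wB = 0 := rfl
lemma B3 (n : ℕ) : anStar n 3 wB = 0 := by
  simp only [wB, anStar_cons, anStar_nil, d3a, d2b, d1a, d0a, d0b]
lemma B4 (n : ℕ) : anStar n 4 wB = 0 := by
  simp only [wB, anStar_cons, anStar_nil, d4a, d3b, d2a, d2b, d1a, d0b]
lemma B6 (n : ℕ) : anStar n 6 wB = 1 := by
  simp only [wB, anStar_cons, anStar_nil, d6a, d5b, d4a, d3a, d2b, d1b, d3b]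

lemma B_even (n q : ℕ) (hn : 12 ≤ n) (h : q % 2 = 0) (h8 : 8 ≤ q) (hle : q ≤ n - 2) :
    anStar n q wB = q - 4 := by
  have e1 : anDelta n q a = q - 1 := da_even n q h (by omega)
  have e2 : anDelta n (q - 1) b = q - 2 := by
    rw [db_odd n (q-1) (by omega) (by omega)]; omega
  have e3 : anDelta n (q - 2) a = q - 3 := by
    rw [da_even n (q-2) (by omega) (by omega)]; omega
  have e4 : anDelta n (q - 3) a = q - 2 := by
    rw [da_odd n (q-3) (by omega) (by omega) (by omega)]; omega
  have e5 : anDelta n (q - 2) b = q - 1 := by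
    rw [db_even n (q-2) (by omega) (by omega) (by omega)]; omega
  have e6 : anDelta n (q - 3) b = q - 4 := by
    rw [db_odd n (q-3) (by omega) (by omega)]; omega
  simp only [wB, anStar_cons, anStar_nil, e1, e2, e3, e4, e5, e6]

lemma B_odd (n q : ℕ) (hn : 12 ≤ n) (h : q % 2 = 1) (h5 : 5 ≤ q) (hle : q ≤ n - 5) :
    anStar n q wB = q + 4 := by
  have e1 : anDelta n q a = q + 1 := da_odd n q h h5 (by omega)
  have e2 : anDelta n (q + 1) b = q + 2 := by
    rw [db_even n (q+1) (by omega) (by omega) (by omega)]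
  have e3 : anDelta n (q + 2) a = q + 3 := by
    rw [da_odd n (q+2) (by omega) (by omega) (by omega)]
  have e4 : anDelta n (q + 3) a = q + 2 := by
    rw [da_even n (q+3) (by omega) (by omega)]; omega
  have e5 : anDelta n (q + 2) b = q + 1 := by
    rw [db_odd n (q+2) (by omega) (by omega)]; omega
  have e6 : anDelta n (q + 3) b = q + 4 := by
    rw [db_even n (q+3) (by omega) (by omega) (by omega)]
  simp only [wB, anStar_cons, anStar_nil, e1, e2, e3, e4, e5, e6]

lemma B_top3 (n : ℕ) (hn : 12 ≤ n) (hev : n % 2 = 0) : anStar n (n - 3) wB = n - 2 := by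
  have e1 : anDelta n (n - 3) a = n - 2 := by
    rw [da_odd n (n-3) (by omega) (by omega) (by omega)]; omega
  have e2 : anDelta n (n - 2) b = n - 1 := by
    rw [db_even n (n-2) (by omega) (by omega) (by omega)]; omega
  have e3 : anDelta n (n - 1) a = n - 1 := da_odd_top n (n-1) (by omega) (by omega) rfl
  have e4 : anDelta n (n - 1) b = n - 2 := by
    rw [db_odd n (n-1) (by omega) (by omega)]; omega
  simp only [wB, anStar_cons, anStar_nil, e1, e2, e3, e4]

lemma B_top1 (n : ℕ) (hn : 12 ≤ n) (hev : n % 2 = 0) : anStar n (n - 1) wB = n - 4 := by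
  have e1 : anDelta n (n - 1) a = n - 1 := da_odd_top n (n-1) (by omega) (by omega) rfl
  have e2 : anDelta n (n - 1) b = n - 2 := by
    rw [db_odd n (n-1) (by omega) (by omega)]; omega
  have e3 : anDelta n (n - 2) a = n - 3 := by
    rw [da_even n (n-2) (by omega) (by omega)]; omega
  have e4 : anDelta n (n - 3) a = n - 2 := by
    rw [da_odd n (n-3) (by omega) (by omega) (by omega)]; omega
  have e5 : anDelta n (n - 2) b = n - 1 := by
    rw [db_even n (n-2) (by omega) (by omega) (by omega)]; omega
  have e6 : anDelta n (n - 3) b = n - 4 := by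
    rw [db_odd n (n-3) (by omega) (by omega)]; omega
  simp only [wB, anStar_cons, anStar_nil, e1, e2, e3, e4, e5, e6]

/-- The invariant: possible states after `aba · B^j`. -/
def Good (n j x : ℕ) : Prop :=
  x = 0 ∨ x = 1 ∨ x = 4 ∨
  (x % 2 = 0 ∧ 6 ≤ x ∧ x ≤ n - 2 ∧ x + 4*j + 6 ≤ 2*n) ∨
  (4*j + 5 ≤ x ∧ x ≤ n - 1)

lemma good_step (n j x : ℕ) (hn : 12 ≤ n) (hev : n % 2 = 0) (hj : 1 ≤ j)
    (hx : Good n j x) : Good n (j + 1) (anStar n x wB) := by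
  rcases hx with rfl | rfl | rfl | ⟨hpar, h6, hle, hbd⟩ | ⟨hlo, hhi⟩
  · rw [B0]; left; rfl
  · rw [B1]; left; rfl
  · rw [B4]; left; rfl
  · -- even block
    by_cases h6' : x = 6
    · subst h6'; rw [B6]; right; left; rfl
    · rw [B_even n x hn hpar (by omega) hle]
      by_cases h8 : x = 8
      · subst h8; right; right; left; rfl
      · right; right; right; left; omega
  · -- tail
    by_cases hpar : x % 2 = 0
    · -- even element of the tail; note x ≤ n - 2 since n is even
      rw [B_even n x hn hpar (by omega) (by omega)]
      right; right; right
      by_cases h8 : x = 8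
      · subst h8; left; omega
      · left; omega
    · by_cases h1 : x = n - 1
      · subst h1; rw [B_top1 n hn hev]
        right; right; right; left; omega
      · by_cases h3 : x = n - 3
        · subst h3; rw [B_top3 n hn hev]
          right; right; right; left; omega
        · rw [B_odd n x hn (by omega) (by omega) (by omega)]
          right; right; right; right; omega

lemma good_iter (n : ℕ) (hn : 12 ≤ n) (hev : n % 2 = 0) :
    ∀ (m j x : ℕ), 1 ≤ j → Good n j x →
      Good n (j + m) (anStar n x (List.replicate m wB).flatten) := by
  intro m
  induction m with
  | zero => intro j x hj hx; simpa [anStar_nil] using hx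
  | succ m ih =>
    intro j x hj hx
    rw [List.replicate_succ, List.flatten_cons, anStar_append]
    rw [show j + (m + 1) = (j + 1) + m by omega]
    exact ih (j + 1) _ (by omega) (good_step n j x hn hev hj hx)

/-- After `aba · B`, every state is `Good 1`. -/
lemma good_base (n q : ℕ) (hn : 12 ≤ n) (hev : n % 2 = 0) (hq : q < n) :
    Good n 1 (anStar n q ([a, b, a] ++ wB)) := by
  have habaB : ([a, b, a] ++ wB : List Letter)
      = a :: b :: a :: wB := rfl
  rcases (by omega : q = 0 ∨ q = 1 ∨ q = 2 ∨ q = 3 ∨ q = 4 ∨ q = 6 ∨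
      (q % 2 = 0 ∧ 8 ≤ q ∧ q ≤ n - 2) ∨ (q % 2 = 1 ∧ 5 ≤ q ∧ q ≤ n - 5) ∨
      q = n - 3 ∨ q = n - 1) with
    rfl | rfl | rfl | rfl | rfl | rfl | ⟨hp, h8, hle⟩ | ⟨hp, h5, hle⟩ | rfl | rfl
  · rw [habaB, anStar_cons, anStar_cons, anStar_cons, d0a, d0b, d0a, B0]; left; rfl
  · rw [habaB, anStar_cons, anStar_cons, anStar_cons, d1a, d0b, d0a, B0]; left; rfl
  · rw [habaB, anStar_cons, anStar_cons, anStar_cons, d2a, d4b n (by omega),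
      d5a n (by omega), B6]
    right; left; rfl
  · rw [habaB, anStar_cons, anStar_cons, anStar_cons, d3a, d2b, d1a, B0]; left; rfl
  · rw [habaB, anStar_cons, anStar_cons, anStar_cons, d4a, d3b, d2a, B4]; left; rfl
  · rw [habaB, anStar_cons, anStar_cons, anStar_cons, d6a, d5b, d4a, B3]; left; rfl
  · -- even q ≥ 8 : aba sends it to q - 3, then B to q + 1
    have e1 : anDelta n q a = q - 1 := da_even n q hp (by omega)
    have e2 : anDelta n (q - 1) b = q - 2 := by
      rw [db_odd n (q-1) (by omega) (by omega)]; omega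
    have e3 : anDelta n (q - 2) a = q - 3 := by
      rw [da_even n (q-2) (by omega) (by omega)]; omega
    rw [habaB, anStar_cons, anStar_cons, anStar_cons, e1, e2, e3,
      B_odd n (q-3) hn (by omega) (by omega) (by omega)]
    right; right; right; right; omega
  · -- odd 5 ≤ q ≤ n - 5 : aba sends it to q + 3, then B to q - 1
    have e1 : anDelta n q a = q + 1 := da_odd n q hp h5 (by omega)
    have e2 : anDelta n (q + 1) b = q + 2 := by
      rw [db_even n (q+1) (by omega) (by omega) (by omega)]
    have e3 : anDelta n (q + 2) a = q + 3 := by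
      rw [da_odd n (q+2) (by omega) (by omega) (by omega)]
    rw [habaB, anStar_cons, anStar_cons, anStar_cons, e1, e2, e3,
      B_even n (q+3) hn (by omega) (by omega) (by omega)]
    by_cases h5' : q = 5
    · subst h5'; right; right; left; omega
    · right; right; right; left; omega
  · -- q = n - 3 : aba sends it to n - 1, then B to n - 4
    have e1 : anDelta n (n - 3) a = n - 2 := by
      rw [da_odd n (n-3) (by omega) (by omega) (by omega)]; omega
    have e2 : anDelta n (n - 2) b = n - 1 := by
      rw [db_even n (n-2) (by omega) (by omega) (by omega)]; omega
    have e3 : anDelta n (n - 1) a = n - 1 := da_odd_top n (n-1) (by omega) (by omega) rfl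
    rw [habaB, anStar_cons, anStar_cons, anStar_cons, e1, e2, e3, B_top1 n hn hev]
    right; right; right; left; omega
  · -- q = n - 1 : aba sends it to n - 3, then B to n - 2
    have e1 : anDelta n (n - 1) a = n - 1 := da_odd_top n (n-1) (by omega) (by omega) rfl
    have e2 : anDelta n (n - 1) b = n - 2 := by
      rw [db_odd n (n-1) (by omega) (by omega)]; omega
    have e3 : anDelta n (n - 2) a = n - 3 := by
      rw [da_even n (n-2) (by omega) (by omega)]; omega
    rw [habaB, anStar_cons, anStar_cons, anStar_cons, e1, e2, e3, B_top3 n hn hev]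
    right; right; right; left; omega

/-- The suffix `ab³ · B · aaba` maps each of `0,1,4,6,8,10` to `0`. -/
lemma suffix_kill (n x : ℕ) (hn : 12 ≤ n)
    (hx : x = 0 ∨ x = 1 ∨ x = 4 ∨ x = 6 ∨ x = 8 ∨ x = 10) :
    anStar n x ([a, b, b, b] ++ wB ++ [a, a, b, a]) = 0 := by
  rcases hx with rfl | rfl | rfl | rfl | rfl | rfl <;>
    simp only [wB, List.append_assoc, List.cons_append, List.nil_append,
      anStar_cons, anStar_nil, d0a, d0b, d1a, d1b, d2a, d2b, d3a, d3b, d4a, d5b,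
      d6a, d7b, d8a, d9b, d10a, d4b n (by omega), d5a n (by omega),
      d6b n (by omega), d8b n hn]

lemma d7a10 : anDelta 10 7 a = 8 := rfl
lemma d8b10 : anDelta 10 8 b = 9 := rfl
lemma d9a10 : anDelta 10 9 a = 9 := rfl

end AnReset

set_option maxHeartbeats 1000000 in
/-- For every even `n ≥ 10`, the word
`aba · (abaabbab)^((n-8)/2) · ab³ · (abaabbab) · aaba` (of length `4n - 13`)
is a reset word for `𝒜ₙ`: it maps every state of `Qₙ` to the sink state `0`. -/
theorem an_reset_word_even (n : ℕ) (hn : 10 ≤ n) (heven : Even n) :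
    ∀ w : List Letter,
      w = [Letter.a, Letter.b, Letter.a] ++
          (List.replicate ((n - 8) / 2)
            [Letter.a, Letter.b, Letter.a, Letter.a,
             Letter.b, Letter.b, Letter.a, Letter.b]).flatten ++
          [Letter.a, Letter.b, Letter.b, Letter.b] ++
          [Letter.a, Letter.b, Letter.a, Letter.a,
           Letter.b, Letter.b, Letter.a, Letter.b] ++
          [Letter.a, Letter.a, Letter.b, Letter.a] →
      w.length = 4 * n - 13 ∧ ∀ q : ℕ, q < n → anStar n q w = 0 := by
  intro w hw
  subst hw
  have hev : n % 2 = 0 := Nat.even_iff.mp heven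
  constructor
  · simp only [List.length_append, List.length_flatten, List.map_replicate,
      List.sum_replicate, smul_eq_mul, List.length_cons, List.length_nil]
    omega
  by_cases h10 : n = 10
  · subst h10
    intro q hq
    interval_cases q <;>
      simp only [show (10 - 8) / 2 = 1 from rfl, List.replicate_one, List.flatten_cons,
        List.flatten_nil, List.append_nil, List.cons_append, List.nil_append,
        AnReset.anStar_cons, AnReset.anStar_nil,
        AnReset.d0a, AnReset.d0b, AnReset.d1a, AnReset.d1b, AnReset.d2a, AnReset.d2b,
        AnReset.d3a, AnReset.d3b, AnReset.d4a, AnReset.d5b, AnReset.d6a, AnReset.d7b,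
        AnReset.d8a, AnReset.d9b, AnReset.d4b 10 le_rfl, AnReset.d5a 10 le_rfl,
        AnReset.d6b 10 le_rfl, AnReset.d7a10, AnReset.d8b10, AnReset.d9a10]
  · -- now n ≥ 12
    have hn12 : 12 ≤ n := by
      rcases heven with ⟨m, hm⟩; omega
    intro q hq
    rw [show ([Letter.a, Letter.b, Letter.a, Letter.a,
           Letter.b, Letter.b, Letter.a, Letter.b] : List Letter) = AnReset.wB from rfl]
    set k := (n - 8) / 2 with hkdef
    have hk1 : 1 ≤ k := by omega
    rw [AnReset.anStar_append, AnReset.anStar_append, AnReset.anStar_append,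
      AnReset.anStar_append]
    rw [show k = (k - 1) + 1 from by omega, List.replicate_succ, List.flatten_cons,
      AnReset.anStar_append]
    have hbase : AnReset.Good n 1 (anStar n (anStar n q [Letter.a, Letter.b, Letter.a])
        AnReset.wB) := by
      rw [← AnReset.anStar_append]
      exact AnReset.good_base n q hn12 hev hq
    have hG := AnReset.good_iter n hn12 hev (k - 1) 1
      (anStar n (anStar n q [Letter.a, Letter.b, Letter.a]) AnReset.wB)
      (Nat.le_refl 1) hbase
    set X := anStar n (anStar n (anStar n q [Letter.a, Letter.b, Letter.a]) AnReset.wB)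
      ((List.replicate (k - 1) AnReset.wB).flatten) with hX
    have hmem : X = 0 ∨ X = 1 ∨ X = 4 ∨ X = 6 ∨ X = 8 ∨ X = 10 := by
      simp only [AnReset.Good] at hG
      omega
    have hs := AnReset.suffix_kill n X hn12 hmem
    rw [AnReset.anStar_append, AnReset.anStar_append] at hs
    exact hs
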